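/- Let (X_i) be i.i.d. real random variables with common distribution P satisfying E|X| < ∞, and let g(p) = inf{r : P(X ≥ r) ≤ p}. Assume g(p) → ∞ as p → 0+ and g is slowly varying at 0. Then limsup_{n→∞} E[max_{1≤i≤n} X_i]/g(1/n) ≤ 1 (the upper bound E M_n ≤ g(1/n)(1+o(1)) of Proposition 3). -/

import Mathlib

open MeasureTheory ProbabilityTheory Filter Topology Set
open scoped ENNReal

/-! The union bound gives `E M_n ≤ a + n E (X - a)⁺` for every `a`; take `a = g q` with `q = 1/n`.
Slow variation gives `g (p/2) ≤ (1 + ε) g p` for small `p`, hence `g (q/2^k) ≤ (1 + ε)^k g q`, so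
`P (X ≥ t) ≤ q/2^k` once `t > (1 + ε)^k a`. Summing these bounds over the layers
`((1 + ε)^k a, (1 + ε)^(k+1) a]` of `E (X - a)⁺ = ∫_a^∞ P (X ≥ t) dt` gives `E (X - a)⁺ ≤ 4 ε a q`,
whence `E M_n ≤ (1 + 4 ε) g (1/n)` for large `n`. -/

noncomputable def upperQuantile (P : Measure ℝ) (p : ℝ) : ℝ :=
  sInf {r : ℝ | (P (Ici r)).toReal ≤ p}

lemma tendsto_measure_Ici_atTop (P : Measure ℝ) [IsFiniteMeasure P] :
    Tendsto (fun r => P (Ici r)) atTop (𝓝 0) := by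
  have hempty : ⋂ r : ℝ, Ici r = ∅ :=
    eq_empty_of_forall_notMem fun x hx => by linarith [mem_Ici.1 (mem_iInter.1 hx (x + 1))]
  simpa [Function.comp_def, hempty] using tendsto_measure_iInter_atTop (μ := P)
    (fun r => measurableSet_Ici.nullMeasurableSet) (fun r s hrs => Ici_subset_Ici.2 hrs)
    ⟨0, measure_ne_top P _⟩

lemma measure_Ici_le_of_upperQuantile_lt (P : Measure ℝ) [IsFiniteMeasure P] {p t : ℝ}
    (hp : 0 < p) (ht : upperQuantile P p < t) : P (Ici t) ≤ ENNReal.ofReal p := by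
  have hne : {r : ℝ | (P (Ici r)).toReal ≤ p}.Nonempty :=
    (((ENNReal.tendsto_toReal ENNReal.zero_ne_top).comp
      (tendsto_measure_Ici_atTop P)).eventually (ge_mem_nhds hp)).exists
  obtain ⟨r, hr, hrt⟩ := exists_lt_of_csInf_lt hne ht
  exact (measure_mono (Ici_subset_Ici.2 hrt.le)).trans
    ((ENNReal.le_ofReal_iff_toReal_le (measure_ne_top P _) hp.le).2 hr)

lemma apply_div_two_pow_le_pow_mul {g : ℝ → ℝ} {q c : ℝ} (hq : 0 < q) (hc : 0 ≤ c)
    (h : ∀ p, 0 < p → p ≤ q → g (p / 2) ≤ c * g p) (k : ℕ) :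
    g (q / 2 ^ k) ≤ c ^ k * g q := by
  induction k with
  | zero => simp
  | succ k ih =>
    calc g (q / 2 ^ (k + 1)) = g (q / 2 ^ k / 2) := by rw [pow_succ, div_div]
      _ ≤ c * g (q / 2 ^ k) := h _ (by positivity) (div_le_self hq.le (one_le_pow₀ one_le_two))
      _ ≤ c * (c ^ k * g q) := mul_le_mul_of_nonneg_left ih hc
      _ = c ^ (k + 1) * g q := by ring

lemma Ioi_subset_iUnion_Ioc_pow_mul {a r : ℝ} (ha : 0 < a) (hr : 1 < r) :
    Ioi a ⊆ ⋃ k : ℕ, Ioc (r ^ k * a) (r ^ (k + 1) * a) := by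
  intro t ht
  obtain ⟨n, hlo, hhi⟩ := exists_mem_Ioc_zpow (div_pos (ha.trans ht) ha) hr
  have hn : 0 ≤ n := by
    by_contra! hn
    have : r ^ (n + 1) ≤ 1 := zpow_le_one_of_nonpos₀ hr.le (by omega)
    linarith [(one_lt_div ha).2 (mem_Ioi.1 ht)]
  lift n to ℕ using hn
  refine mem_iUnion.2 ⟨n, ?_, ?_⟩
  · rwa [zpow_natCast, lt_div_iff₀ ha] at hlo
  · rwa [← Nat.cast_add_one, zpow_natCast, div_le_iff₀ ha] at hhi

lemma setLIntegral_Ioi_le_of_le_geometric {f : ℝ → ℝ≥0∞} {a r θ C : ℝ} (ha : 0 < a) (hr : 1 < r)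
    (hθ : 0 ≤ θ) (hθr : θ * r < 1) (hC : 0 ≤ C)
    (hf : ∀ k : ℕ, ∀ t, r ^ k * a < t → f t ≤ ENNReal.ofReal (C * θ ^ k)) :
    ∫⁻ t in Ioi a, f t ≤ ENNReal.ofReal (C * a * (r - 1) / (1 - θ * r)) := by
  have hr' : 0 ≤ r - 1 := by linarith
  have hterm : ∀ k : ℕ, ∫⁻ t in Ioc (r ^ k * a) (r ^ (k + 1) * a), f t ≤
      ENNReal.ofReal (C * a * (r - 1) * (θ * r) ^ k) := fun k => calc
    _ ≤ ∫⁻ _ in Ioc (r ^ k * a) (r ^ (k + 1) * a), ENNReal.ofReal (C * θ ^ k) :=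
        setLIntegral_mono' measurableSet_Ioc fun t ht => hf k t ht.1
    _ = ENNReal.ofReal (C * θ ^ k * (r ^ (k + 1) * a - r ^ k * a)) := by
        rw [setLIntegral_const, Real.volume_Ioc, ← ENNReal.ofReal_mul (by positivity)]
    _ = _ := by congr 1; ring
  have hsum : HasSum (fun k : ℕ => C * a * (r - 1) * (θ * r) ^ k)
      (C * a * (r - 1) / (1 - θ * r)) :=
    (hasSum_geometric_of_lt_one (by positivity) hθr).mul_left (C * a * (r - 1))
  calc ∫⁻ t in Ioi a, f t
      ≤ ∫⁻ t in ⋃ k : ℕ, Ioc (r ^ k * a) (r ^ (k + 1) * a), f t :=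
        lintegral_mono_set (Ioi_subset_iUnion_Ioc_pow_mul ha hr)
    _ ≤ ∑' k : ℕ, ∫⁻ t in Ioc (r ^ k * a) (r ^ (k + 1) * a), f t := lintegral_iUnion_le _ _
    _ ≤ ∑' k : ℕ, ENNReal.ofReal (C * a * (r - 1) * (θ * r) ^ k) := ENNReal.tsum_le_tsum hterm
    _ = _ := by
        rw [← ENNReal.ofReal_tsum_of_nonneg (fun k => by positivity) hsum.summable, hsum.tsum_eq]

lemma lintegral_posPart_sub_le_setLIntegral_measure_Ici (P : Measure ℝ) (a : ℝ) :
    ∫⁻ x, ENNReal.ofReal (max (x - a) 0) ∂P ≤ ∫⁻ t in Ioi a, P (Ici t) := calc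
  _ = ∫⁻ t in Ioi 0, P {x | t < max (x - a) 0} :=
      lintegral_eq_lintegral_meas_lt P (ae_of_all _ fun x => le_max_right _ _) (by fun_prop)
  _ ≤ ∫⁻ t in Ioi 0, P (Ici (t + a)) := by
      refine setLIntegral_mono' measurableSet_Ioi fun t ht =>
        measure_mono fun x (hx : t < max (x - a) 0) => ?_
      rcases lt_max_iff.1 hx with hx | hx
      · exact mem_Ici.2 (by linarith)
      · exact absurd (mem_Ioi.1 ht) hx.not_gt
  _ = ∫⁻ t in Ioi a, P (Ici t) := by
      simpa using (measurePreserving_add_right volume a).setLIntegral_comp_preimage_emb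
        (measurableEmbedding_addRight a) (fun t => P (Ici t)) (Ioi a)

lemma integral_posPart_sub_le_of_upperQuantile_le (P : Measure ℝ) [IsFiniteMeasure P]
    {a q ε : ℝ} (ha : 0 < a) (hq : 0 < q) (hε : 0 < ε) (hε' : ε ≤ 1 / 2)
    (hG : ∀ k : ℕ, upperQuantile P (q / 2 ^ k) ≤ (1 + ε) ^ k * a) :
    ∫ x, max (x - a) 0 ∂P ≤ 4 * ε * a * q := by
  have htail : ∀ k : ℕ, ∀ t, (1 + ε) ^ k * a < t → P (Ici t) ≤ ENNReal.ofReal (q * 2⁻¹ ^ k) :=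
    fun k t ht => by
      simpa [div_eq_mul_inv] using
        measure_Ici_le_of_upperQuantile_lt P (by positivity) ((hG k).trans_lt ht)
  have hbound := (lintegral_posPart_sub_le_setLIntegral_measure_Ici P a).trans
    (setLIntegral_Ioi_le_of_le_geometric ha (by linarith) (by norm_num) (by linarith) hq.le htail)
  rw [integral_eq_lintegral_of_nonneg_ae (f := fun x => max (x - a) 0)
    (ae_of_all _ fun x => le_max_right _ _) (by fun_prop)]
  refine ENNReal.toReal_le_of_le_ofReal (by positivity) (hbound.trans (ENNReal.ofReal_le_ofReal ?_))
  rw [div_le_iff₀ (by linarith)]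
  nlinarith [mul_pos (mul_pos ha hq) hε]

lemma eventually_integral_posPart_sub_le (P : Measure ℝ) [IsFiniteMeasure P] {g : ℝ → ℝ}
    (hg : ∀ p, 0 < p → p < 1 → g p = upperQuantile P p) (hginf : Tendsto g (𝓝[>] 0) atTop)
    (hslow : Tendsto (fun p => g (2⁻¹ * p) / g p) (𝓝[>] 0) (𝓝 1)) {ε : ℝ} (hε : 0 < ε) :
    ∀ᶠ q in 𝓝[>] 0, 0 < g q ∧ ∫ x, max (x - g q) 0 ∂P ≤ ε * g q * q := by
  set δ := min (ε / 4) (1 / 2)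
  have hδ : 0 < δ := lt_min (by positivity) (by norm_num)
  have hloc : ∀ᶠ p in 𝓝[>] (0 : ℝ), p < 1 ∧ 0 < g p ∧ g (p / 2) ≤ (δ + 1) * g p := by
    filter_upwards [Ioo_mem_nhdsGT one_pos, hginf.eventually_gt_atTop 0,
      hslow.eventually_le_const (lt_add_of_pos_left 1 hδ)] with p hp hgp hratio
    rw [inv_mul_eq_div, div_le_iff₀ hgp] at hratio
    exact ⟨hp.2, hgp, hratio⟩
  obtain ⟨u, hu, hsub⟩ := mem_nhdsGT_iff_exists_Ioo_subset.1 hloc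
  filter_upwards [Ioo_mem_nhdsGT hu] with q hq
  obtain ⟨hq1, hgq, -⟩ := hsub hq
  refine ⟨hgq, (integral_posPart_sub_le_of_upperQuantile_le P hgq hq.1 hδ (min_le_right _ _)
    fun k => ?_).trans ?_⟩
  · rw [← hg _ (div_pos hq.1 (by positivity))
      ((div_le_self hq.1.le (one_le_pow₀ one_le_two)).trans_lt hq1)]
    simpa only [add_comm] using apply_div_two_pow_le_pow_mul hq.1 (by linarith)
      (fun p hp hpq => (hsub ⟨hp, hpq.trans_lt hq.2⟩).2.2) k
  · have : 4 * δ ≤ ε := by linarith [min_le_left (ε / 4) (1 / 2)]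
    gcongr
    exact hq.1.le

section FiniteMax

variable {Ω ι : Type*} [MeasurableSpace Ω] {μ : Measure Ω} [Fintype ι] [Nonempty ι]
  {X : ι → Ω → ℝ}

lemma iSup_le_add_sum_posPart_sub (x : ι → ℝ) (a : ℝ) : ⨆ i, x i ≤ a + ∑ i, max (x i - a) 0 :=
  ciSup_le fun i => by
    linarith [le_max_left (x i - a) 0, Finset.single_le_sum (f := fun j => max (x j - a) 0)
      (fun j _ => le_max_right _ _) (Finset.mem_univ i)]

lemma integrable_iSup (hX : ∀ i, Integrable (X i) μ) : Integrable (fun ω => ⨆ i, X i ω) μ := by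
  let i₀ := Classical.arbitrary ι
  refine integrable_of_le_of_le (g₁ := X i₀) (g₂ := fun ω => ∑ i, |X i ω|)
    (AEMeasurable.iSup fun i => (hX i).aemeasurable).aestronglyMeasurable
    (ae_of_all _ fun ω => le_ciSup (f := (X · ω)) (Finite.bddAbove_range _) i₀)
    (ae_of_all _ fun ω => ciSup_le fun i => (le_abs_self _).trans
      (Finset.single_le_sum (f := fun j => |X j ω|) (fun j _ => abs_nonneg _) (Finset.mem_univ i)))
    (hX i₀) (integrable_finsetSum _ fun i _ => (hX i).abs)

lemma integral_le_integral_iSup (hX : ∀ i, Integrable (X i) μ) (i : ι) :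
    ∫ ω, X i ω ∂μ ≤ ∫ ω, ⨆ j, X j ω ∂μ :=
  integral_mono (hX i) (integrable_iSup hX) fun ω =>
    le_ciSup (f := (X · ω)) (Finite.bddAbove_range _) i

lemma integral_iSup_le_add_sum [IsProbabilityMeasure μ] (hX : ∀ i, Integrable (X i) μ) (a : ℝ) :
    ∫ ω, ⨆ i, X i ω ∂μ ≤ a + ∑ i, ∫ ω, max (X i ω - a) 0 ∂μ := by
  have hpos : ∀ i, Integrable (fun ω => max (X i ω - a) 0) μ :=
    fun i => ((hX i).sub (integrable_const a)).pos_part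
  calc ∫ ω, ⨆ i, X i ω ∂μ ≤ ∫ ω, a + ∑ i, max (X i ω - a) 0 ∂μ :=
        integral_mono (integrable_iSup hX) ((integrable_const a).add
          (integrable_finsetSum _ fun i _ => hpos i)) fun ω => iSup_le_add_sum_posPart_sub _ a
    _ = a + ∑ i, ∫ ω, max (X i ω - a) 0 ∂μ := by
        rw [integral_add (integrable_const a) (integrable_finsetSum _ fun i _ => hpos i),
          integral_finsetSum _ fun i _ => hpos i, integral_const, probReal_univ, one_smul]

end FiniteMax

section IdentDistrib

variable {Ω : Type*} [MeasurableSpace Ω] {μ : Measure Ω} {X : ℕ → Ω → ℝ} {P : Measure ℝ}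

lemma integral_le_integral_iSup_fin (hid : ∀ i, IdentDistrib (X i) id μ P)
    (hint : Integrable id P) (n : ℕ) [Nonempty (Fin n)] : ∫ x, x ∂P ≤ ∫ ω, ⨆ i : Fin n, X i ω ∂μ :=
  (hid 0).integral_eq ▸ integral_le_integral_iSup (fun i : Fin n => (hid i).integrable_iff.2 hint)
    ⟨0, Fin.pos_iff_nonempty.2 ‹_›⟩

lemma integral_iSup_fin_le_add_mul [IsProbabilityMeasure μ] (hid : ∀ i, IdentDistrib (X i) id μ P)
    (hint : Integrable id P) (n : ℕ) [Nonempty (Fin n)] (a : ℝ) :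
    ∫ ω, ⨆ i : Fin n, X i ω ∂μ ≤ a + n * ∫ x, max (x - a) 0 ∂P := by
  have hexcess : ∀ i, ∫ ω, max (X i ω - a) 0 ∂μ = ∫ x, max (x - a) 0 ∂P :=
    fun i => ((hid i).comp (u := fun x => max (x - a) 0) (by fun_prop)).integral_eq
  simpa only [hexcess, Finset.sum_const, Finset.card_univ, Fintype.card_fin, nsmul_eq_mul] using
    integral_iSup_le_add_sum (fun i : Fin n => (hid i).integrable_iff.2 hint) a

end IdentDistrib

theorem limsup_expectation_max_iid_general
    {Ω : Type*} [MeasurableSpace Ω] (μ : Measure Ω) [IsProbabilityMeasure μ]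
    (X : ℕ → Ω → ℝ) (hmeas : ∀ i, Measurable (X i))
    (P : Measure ℝ) [IsProbabilityMeasure P]
    (hlaw : ∀ i, μ.map (X i) = P)
    (hint : Integrable id P)
    (g : ℝ → ℝ)
    (hg : ∀ p : ℝ, 0 < p → p < 1 → g p = sInf {r : ℝ | (P (Set.Ici r)).toReal ≤ p})
    (hginf : Tendsto g (𝓝[>] 0) atTop)
    (hslow : ∀ c : ℝ, 0 < c → Tendsto (fun p => g (c * p) / g p) (𝓝[>] 0) (𝓝 1)) :
    Filter.limsup (fun n : ℕ => (∫ ω, (⨆ i : Fin n, X i ω) ∂μ) / g (1 / n)) atTop ≤ 1 := by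
  have hid : ∀ i, IdentDistrib (X i) id μ P :=
    fun i => ⟨(hmeas i).aemeasurable, aemeasurable_id, by simpa using hlaw i⟩
  have h1n : Tendsto (fun n : ℕ => 1 / (n : ℝ)) atTop (𝓝[>] 0) := by
    simpa only [one_div, Function.comp_def] using
      tendsto_inv_atTop_nhdsGT_zero.comp tendsto_natCast_atTop_atTop
  have hupper : ∀ ε, 0 < ε → ∀ᶠ n : ℕ in atTop,
      (∫ ω, (⨆ i : Fin n, X i ω) ∂μ) / g (1 / n) ≤ 1 + ε := fun ε hε => by
    filter_upwards [eventually_ge_atTop 1, h1n.eventually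
      (eventually_integral_posPart_sub_le P hg hginf (hslow 2⁻¹ (by norm_num)) hε)]
      with n hn ⟨hgn, htail⟩
    have : Nonempty (Fin n) := ⟨⟨0, hn⟩⟩
    rw [div_le_iff₀ hgn]
    calc ∫ ω, (⨆ i : Fin n, X i ω) ∂μ ≤ g (1 / n) + n * ∫ x, max (x - g (1 / n)) 0 ∂P :=
          integral_iSup_fin_le_add_mul hid hint n _
      _ ≤ g (1 / n) + n * (ε * g (1 / n) * (1 / n)) := by gcongr
      _ = (1 + ε) * g (1 / n) := by field_simp
  have hlower : ∀ᶠ n : ℕ in atTop,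
      -|∫ x, x ∂P| ≤ (∫ ω, (⨆ i : Fin n, X i ω) ∂μ) / g (1 / n) := by
    filter_upwards [eventually_ge_atTop 1, h1n.eventually (hginf.eventually_ge_atTop 1)]
      with n hn hgn
    have : Nonempty (Fin n) := ⟨⟨0, hn⟩⟩
    calc -|∫ x, x ∂P| ≤ -|∫ x, x ∂P| / g (1 / n) := by
          rw [neg_div, neg_le_neg_iff]; exact div_le_self (abs_nonneg _) hgn
      _ ≤ _ := div_le_div_of_nonneg_right
          ((neg_abs_le _).trans (integral_le_integral_iSup_fin hid hint n)) (by linarith)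
  exact le_of_forall_pos_le_add fun ε hε =>
    limsup_le_of_le (isCoboundedUnder_le_of_eventually_le atTop hlower) (hupper ε hε)

/-- **Upper bound for the expected maximum of i.i.d. random variables** (Proposition 3).
Under the assumptions of Theorem 1, `limsup_{n → ∞} E M_n / g(1/n) ≤ 1`. -/
theorem limsup_expectation_max_iid
    {Ω : Type*} [MeasurableSpace Ω] (μ : Measure Ω) [IsProbabilityMeasure μ]
    (X : ℕ → Ω → ℝ) (hmeas : ∀ i, Measurable (X i))
    (hindep : iIndepFun X μ)
    (P : Measure ℝ) [IsProbabilityMeasure P]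
    (hlaw : ∀ i, μ.map (X i) = P)
    (hint : Integrable id P)
    (g : ℝ → ℝ)
    (hg : ∀ p : ℝ, 0 < p → p < 1 → g p = sInf {r : ℝ | (P (Set.Ici r)).toReal ≤ p})
    (hginf : Tendsto g (𝓝[>] 0) atTop)
    (hslow : ∀ c : ℝ, 0 < c → Tendsto (fun p => g (c * p) / g p) (𝓝[>] 0) (𝓝 1)) :
    Filter.limsup (fun n : ℕ => (∫ ω, (⨆ i : Fin n, X i ω) ∂μ) / g (1 / n)) atTop ≤ 1 :=
  limsup_expectation_max_iid_general μ X hmeas P hlaw hint g hg hginf hslow
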